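/- Let ρ be an irreducible unitary representation of the finitary symmetric group S∞ of ℕ on a complex Hilbert space H, and for α ∈ ℕ let H[α] denote the subspace of vectors fixed by ρ(g) for all g ∈ S∞[α]. If H[α] ≠ 0 for some α, then the union ⋃_α H[α] is dense in H. -/

import Mathlib

open scoped InnerProductSpace

/-- The finitary symmetric group of a countable set: permutations with finite support. -/
def finitarySymm (Ω : Type*) : Subgroup (Equiv.Perm Ω) where
  carrier := {g | {x | g x ≠ x}.Finite}
  one_mem' := by simp
  mul_mem' := by
    intro a b ha hb
    refine Set.Finite.subset (ha.union hb) fun x hx => ?_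
    simp only [Set.mem_setOf_eq, Equiv.Perm.mul_apply] at hx
    simp only [Set.mem_union, Set.mem_setOf_eq]
    by_cases h : b x = x
    · exact Or.inl (by simpa [h] using hx)
    · exact Or.inr h
  inv_mem' := by
    intro a ha
    refine Set.Finite.subset ha fun x hx => ?_
    simp only [Set.mem_setOf_eq] at hx ⊢
    intro h
    apply hx
    nth_rewrite 1 [← h]
    simp

/-- `S∞`, the finitary symmetric group of `ℕ`. -/
abbrev SInf := ↥(finitarySymm ℕ)

/-- Membership in the subgroup `S∞[α]`: finitary permutations fixing every `x < α`. -/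
def InSInf (α : ℕ) (g : SInf) : Prop := ∀ x < α, (g : Equiv.Perm ℕ) x = x

/-- Irreducibility of a unitary representation: the space is nonzero and the only
invariant closed subspaces are `⊥` and `⊤`. -/
def IsIrreducibleRep {G : Type*} [Group G] {H : Type*} [NormedAddCommGroup H]
    [InnerProductSpace ℂ H] [CompleteSpace H] (ρ : G →* unitary (H →L[ℂ] H)) : Prop :=
  (∃ v : H, v ≠ 0) ∧
    ∀ V : Submodule ℂ H, IsClosed (V : Set H) →
      (∀ (g : G), ∀ v ∈ V, (ρ g : H →L[ℂ] H) v ∈ V) → V = ⊥ ∨ V = ⊤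

/-! The union `⋃ α, H[α]` is an increasing union of subspaces, hence a subspace, and it is
`S∞`-invariant: a finitary `g` moves only points below some `β`, so it conjugates `S∞[max α β]`
into `S∞[α]` and therefore carries `H[α]` into `H[max α β]`. Its closure is then a closed
invariant subspace, nonzero because some `H[α]` is, so by irreducibility it is all of `H`. -/

section FixedSubmodule

variable {G : Type*} [Group G] {H : Type*} [NormedAddCommGroup H] [InnerProductSpace ℂ H]
  [CompleteSpace H] (ρ : G →* unitary (H →L[ℂ] H))

def fixedSubmodule (S : Set G) : Submodule ℂ H where
  carrier := {v | ∀ g ∈ S, (ρ g : H →L[ℂ] H) v = v}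
  add_mem' hv hw g hg := by simp only [map_add, hv g hg, hw g hg]
  zero_mem' g _ := map_zero _
  smul_mem' c v hv g hg := by simp only [map_smul, hv g hg]

variable {ρ}

theorem fixedSubmodule_anti {S T : Set G} (hST : S ⊆ T) :
    fixedSubmodule ρ T ≤ fixedSubmodule ρ S :=
  fun _ hv g hg => hv g (hST hg)

theorem unitaryRep_mul_apply (g h : G) (v : H) :
    (ρ (g * h) : H →L[ℂ] H) v = (ρ g : H →L[ℂ] H) ((ρ h : H →L[ℂ] H) v) := by
  rw [map_mul]
  rfl

theorem apply_mem_fixedSubmodule {S T : Set G} {g : G} (hconj : ∀ h ∈ T, g⁻¹ * h * g ∈ S)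
    {v : H} (hv : v ∈ fixedSubmodule ρ S) : (ρ g : H →L[ℂ] H) v ∈ fixedSubmodule ρ T := by
  intro h hh
  calc (ρ h : H →L[ℂ] H) ((ρ g : H →L[ℂ] H) v)
      = (ρ g : H →L[ℂ] H) ((ρ (g⁻¹ * h * g) : H →L[ℂ] H) v) := by
        simp only [← unitaryRep_mul_apply, mul_assoc, mul_inv_cancel_left]
    _ = (ρ g : H →L[ℂ] H) v := by rw [hv _ (hconj h hh)]

end FixedSubmodule

theorem IsIrreducibleRep.dense_of_invariant {G : Type*} [Group G] {H : Type*}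
    [NormedAddCommGroup H] [InnerProductSpace ℂ H] [CompleteSpace H]
    {ρ : G →* unitary (H →L[ℂ] H)} (hρ : IsIrreducibleRep ρ) {U : Submodule ℂ H} (hU : U ≠ ⊥)
    (hinv : ∀ g, ∀ v ∈ U, (ρ g : H →L[ℂ] H) v ∈ U) : Dense (U : Set H) := by
  have hclosure_inv : ∀ g, ∀ v ∈ U.topologicalClosure,
      (ρ g : H →L[ℂ] H) v ∈ U.topologicalClosure :=
    fun g _ hv => map_mem_closure (ρ g : H →L[ℂ] H).continuous hv (hinv g)
  rcases hρ.2 _ U.isClosed_topologicalClosure hclosure_inv with hbot | htop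
  · exact absurd (eq_bot_iff.2 (hbot ▸ U.le_topologicalClosure)) hU
  · exact U.dense_iff_topologicalClosure_eq_top.2 htop

theorem InSInf.mono {α β : ℕ} (hαβ : α ≤ β) {g : SInf} (hg : InSInf β g) : InSInf α g :=
  fun x hx => hg x (hx.trans_le hαβ)

theorem Equiv.Perm.apply_lt_of_forall_le_apply_eq {α : Type*} [LinearOrder α]
    {g : Equiv.Perm α} {β : α} (hg : ∀ x, β ≤ x → g x = x) {x : α} (hx : x < β) : g x < β := by
  by_contra! hgx
  have hgx_eq : g x = x := g.injective (hg _ hgx)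
  exact hx.not_ge (hgx_eq ▸ hgx)

theorem SInf.exists_forall_le_apply_eq (g : SInf) :
    ∃ β, ∀ x, β ≤ x → (g : Equiv.Perm ℕ) x = x := by
  obtain ⟨β, hβ⟩ := (show {x | (g : Equiv.Perm ℕ) x ≠ x}.Finite from g.2).bddAbove
  exact ⟨β + 1, fun x hx => by_contra fun hgx => by have := hβ hgx; omega⟩

theorem inSInf_conj {g h : SInf} {α β : ℕ} (hg : ∀ x, β ≤ x → (g : Equiv.Perm ℕ) x = x)
    (hh : InSInf (max α β) h) : InSInf α (g⁻¹ * h * g) := by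
  intro x hx
  have hgx : (g : Equiv.Perm ℕ) x < max α β := by
    rcases lt_or_ge x β with hxβ | hxβ
    · exact lt_max_of_lt_right (Equiv.Perm.apply_lt_of_forall_le_apply_eq hg hxβ)
    · exact lt_max_of_lt_left (by rwa [hg x hxβ])
  simp [hh _ hgx]

/-- **Proposition 2.1(b)**: for an irreducible unitary representation of `S∞`, if some
subspace `H[α]` of `S∞[α]`-fixed vectors is nonzero, then `⋃_α H[α]` is dense. -/
theorem union_fixed_dense_of_irreducible {H : Type*} [NormedAddCommGroup H]
    [InnerProductSpace ℂ H] [CompleteSpace H]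
    (ρ : SInf →* unitary (H →L[ℂ] H)) (hirr : IsIrreducibleRep ρ)
    (hne : ∃ (α : ℕ) (v : H), v ≠ 0 ∧ ∀ g : SInf, InSInf α g → (ρ g : H →L[ℂ] H) v = v) :
    Dense (⋃ α : ℕ, {v : H | ∀ g : SInf, InSInf α g → (ρ g : H →L[ℂ] H) v = v}) := by
  set F : ℕ → Submodule ℂ H := fun α => fixedSubmodule ρ {g | InSInf α g}
  have hdir : Directed (· ≤ ·) F :=
    Monotone.directed_le fun _ _ hαβ => fixedSubmodule_anti fun _ => InSInf.mono hαβ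
  have hunion : ⋃ α, (F α : Set H) = ↑(⨆ α, F α) := (Submodule.coe_iSup_of_directed _ hdir).symm
  refine hunion ▸ hirr.dense_of_invariant ?_ ?_
  · obtain ⟨α, v, hv0, hv⟩ := hne
    exact Submodule.ne_bot_iff _ |>.2 ⟨v, Submodule.mem_iSup_of_mem α hv, hv0⟩
  · intro g v hv
    obtain ⟨α, hvα⟩ := (Submodule.mem_iSup_of_directed _ hdir).1 hv
    obtain ⟨β, hβ⟩ := g.exists_forall_le_apply_eq
    exact Submodule.mem_iSup_of_mem (max α β)
      (apply_mem_fixedSubmodule (fun _ => inSInf_conj hβ) hvα)
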